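/- arXiv:0910.5429 — 2 statements merged into one kernel-verified Lean document; each statement's English description precedes it below -/
import Mathlib

section
/- Two-vertex join factorization: if G is the two-vertex join of graphs G_1 and G_2 at vertices v_1 and v_2 (identify an edge e_1 of G_1 with an edge e_2 of G_2 and cut it), then Ψ_G = Φ^{{v_1},{v_2}}_{G_1\e_1} · Ψ_{G_2\e_2} + Ψ_{G_1\e_1} · Φ^{{v_1},{v_2}}_{G_2\e_2}. -/
/-- A finite multigraph with oriented edges: each edge has a source and a target vertex.
Self-loops (src = tgt) and parallel edges are allowed. -/
structure Multigraph (E V : Type*) where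
  src : E → V
  tgt : E → V

namespace Multigraph

variable {E V : Type*}

/-- Two vertices are adjacent via an edge of the subset `F`. -/
def Adj (G : Multigraph E V) (F : Finset E) (a b : V) : Prop :=
  ∃ e ∈ F, (G.src e = a ∧ G.tgt e = b) ∨ (G.src e = b ∧ G.tgt e = a)

/-- Reachability (connectivity) using only edges in `F`. -/
def Reach (G : Multigraph E V) (F : Finset E) : V → V → Prop :=
  Relation.ReflTransGen (G.Adj F)

/-- `T` is (the edge set of) a spanning tree of `G`: it connects all vertices and has
`|V| - 1` edges. -/
def IsSpanningTree (G : Multigraph E V) [Fintype V] (T : Finset E) : Prop :=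
  (∀ v w : V, G.Reach T v w) ∧ T.card + 1 = Fintype.card V

/-- `G` is connected. -/
def Connected (G : Multigraph E V) [Fintype E] [Fintype V] : Prop :=
  ∀ v w : V, G.Reach Finset.univ v w

/-- The signed incidence matrix entry of edge `e` at vertex `v`:
`+1` if `e` begins at `v`, `-1` if `e` ends at `v`, `0` otherwise (in particular `0`
for self-loops). -/
def inc (G : Multigraph E V) (R : Type*) [Ring R] [DecidableEq V] (e : E) (v : V) : R :=
  (if G.src e = v then 1 else 0) - (if G.tgt e = v then 1 else 0)

open Classical in
/-- The Kirchhoff (graph) polynomial `Ψ_G = Σ_T Π_{e ∉ T} α_e`, sum over spanning trees. -/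
noncomputable def kirchhoff (G : Multigraph E V) [Fintype E] [DecidableEq E] [Fintype V] :
    MvPolynomial E ℚ :=
  ∑ T : Finset E, if G.IsSpanningTree T then ∏ e ∈ Tᶜ, MvPolynomial.X e else 0

/-- `F` is a spanning forest of `G` whose trees realize the partition `parts` of a subset of
the vertices: it has `|V| - |parts|` edges (forcing acyclicity), vertices in the same part
are connected, vertices in different parts are disconnected, and every vertex lies in the
tree of some part. -/
def IsSpanningForest (G : Multigraph E V) [Fintype V] (parts : Finset (Finset V))
    (F : Finset E) : Prop :=
  F.card + parts.card = Fintype.card V ∧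
  (∀ p ∈ parts, ∀ v ∈ p, ∀ w ∈ p, G.Reach F v w) ∧
  (∀ p ∈ parts, ∀ q ∈ parts, p ≠ q → ∀ v ∈ p, ∀ w ∈ q, ¬ G.Reach F v w) ∧
  (∀ v : V, ∃ p ∈ parts, ∃ w ∈ p, G.Reach F v w)

open Classical in
/-- The spanning forest polynomial `Φ^P_G = Σ_F Π_{e ∉ F} α_e`. -/
noncomputable def forestPoly (G : Multigraph E V) [Fintype E] [DecidableEq E] [Fintype V]
    (parts : Finset (Finset V)) : MvPolynomial E ℚ :=
  ∑ F : Finset E, if G.IsSpanningForest parts F then ∏ e ∈ Fᶜ, MvPolynomial.X e else 0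

end Multigraph

/-- `parts` is a set partition (of the union of its parts): parts are nonempty and
pairwise disjoint. -/
def IsSetPartition {V : Type*} (parts : Finset (Finset V)) : Prop :=
  ∅ ∉ parts ∧ ∀ p ∈ parts, ∀ q ∈ parts, p ≠ q → Disjoint p q

/-- `parts` is a set partition of the finite vertex set `W`. -/
def IsPartitionOf {V : Type*} (W : Finset V) (parts : Finset (Finset V)) : Prop :=
  IsSetPartition parts ∧ (∀ p ∈ parts, p ⊆ W) ∧ ∀ v ∈ W, ∃ p ∈ parts, v ∈ p

/-! Write an edge set of the join as `T₁ ⊔ T₂`. A path of `G` can only pass between the two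
sides through `v₁` or `v₂`, so `T₁ ⊔ T₂` connects `G` iff in each `Gᵢ` every vertex is joined by
`Tᵢ` to `v₁` or `v₂`, and `v₁, v₂` are joined in `G₁` or in `G₂`. Since `|V| = |S₁| + |S₂| - 2`,
counting edges then makes the side joining `v₁, v₂` a spanning tree and the other a two-tree
forest separating them. The complement monomial of `T₁ ⊔ T₂` being the product of those of `T₁`
and `T₂`, the polynomial identity is this bijection. -/

namespace Multigraph

variable {E V : Type*} (G : Multigraph E V) {F : Finset E}

theorem Adj.symm {G : Multigraph E V} {a b : V} (h : G.Adj F a b) : G.Adj F b a := by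
  obtain ⟨e, he, h⟩ := h
  exact ⟨e, he, h.symm⟩

theorem Reach.symm {G : Multigraph E V} {a b : V} (h : G.Reach F a b) : G.Reach F b a := by
  induction h with
  | refl => exact .refl
  | tail _ hbc ih => exact ih.head hbc.symm

theorem eq_of_reach_empty {a b : V} (h : G.Reach ∅ a b) : a = b := by
  induction h with
  | refl => rfl
  | tail _ hadj ih => obtain ⟨e, he, -⟩ := hadj; simp at he

theorem Reach.map {E' W : Type*} {G : Multigraph E V} {G' : Multigraph E' W} {F' : Finset E'}
    (f : V → W) (g : E → E') (hsrc : ∀ e, G'.src (g e) = f (G.src e))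
    (htgt : ∀ e, G'.tgt (g e) = f (G.tgt e)) (hF : ∀ e ∈ F, g e ∈ F') {a b : V}
    (h : G.Reach F a b) : G'.Reach F' (f a) (f b) := by
  refine Relation.ReflTransGen.lift f (fun x y hxy => ?_) a b h
  obtain ⟨e, he, hxy⟩ := hxy
  refine ⟨g e, hF e he, ?_⟩
  rcases hxy with ⟨rfl, rfl⟩ | ⟨rfl, rfl⟩
  · exact Or.inl ⟨hsrc e, htgt e⟩
  · exact Or.inr ⟨hsrc e, htgt e⟩

theorem reach_or_of_reach_insert [DecidableEq E] {e : E} {a b : V}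
    (h : G.Reach (insert e F) a b) :
    G.Reach F a b ∨ (G.Reach F a (G.src e) ∧ G.Reach F (G.tgt e) b) ∨
      (G.Reach F a (G.tgt e) ∧ G.Reach F (G.src e) b) := by
  induction h with
  | refl => exact Or.inl .refl
  | @tail b c _ hadj ih =>
    obtain ⟨f, hf, hbc⟩ := hadj
    rcases Finset.mem_insert.1 hf with rfl | hf
    · rcases hbc with ⟨rfl, rfl⟩ | ⟨rfl, rfl⟩ <;>
        rcases ih with h | ⟨h, -⟩ | ⟨h, -⟩ <;>
        first
          | exact Or.inl h
          | exact Or.inr (Or.inl ⟨h, .refl⟩)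
          | exact Or.inr (Or.inr ⟨h, .refl⟩)
    · have hbc : G.Adj F b c := ⟨f, hf, hbc⟩
      rcases ih with h | ⟨h₁, h₂⟩ | ⟨h₁, h₂⟩
      · exact Or.inl (h.tail hbc)
      · exact Or.inr (Or.inl ⟨h₁, h₂.tail hbc⟩)
      · exact Or.inr (Or.inr ⟨h₁, h₂.tail hbc⟩)

/-- After deleting an edge `e`, every vertex is still anchored once one endpoint of `e` joins
the anchors. -/
theorem card_le_card_add_card_of_reach [Fintype V] (F : Finset E)
    (A : Finset V) (h : ∀ v, ∃ a ∈ A, G.Reach F v a) :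
    Fintype.card V ≤ F.card + A.card := by
  classical
  induction F using Finset.induction_on generalizing A with
  | empty =>
    have hA : (Finset.univ : Finset V) ⊆ A := fun v _ => by
      obtain ⟨a, ha, hva⟩ := h v
      rwa [G.eq_of_reach_empty hva]
    simpa using Finset.card_le_card hA
  | @insert e F he ih =>
    rw [Finset.card_insert_of_notMem he]
    by_cases ht : ∃ a ∈ A, G.Reach F (G.tgt e) a
    · obtain ⟨a₀, ha₀, hta₀⟩ := ht
      refine (ih (insert (G.src e) A) fun v => ?_).trans (by grind [Finset.card_insert_le])
      obtain ⟨a, ha, hva⟩ := h v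
      rcases G.reach_or_of_reach_insert hva with h | ⟨h, -⟩ | ⟨h, -⟩
      · exact ⟨a, Finset.mem_insert_of_mem ha, h⟩
      · exact ⟨G.src e, Finset.mem_insert_self _ _, h⟩
      · exact ⟨a₀, Finset.mem_insert_of_mem ha₀, h.trans hta₀⟩
    · refine (ih (insert (G.tgt e) A) fun v => ?_).trans (by grind [Finset.card_insert_le])
      obtain ⟨a, ha, hva⟩ := h v
      rcases G.reach_or_of_reach_insert hva with h | ⟨-, h⟩ | ⟨h, -⟩
      · exact ⟨a, Finset.mem_insert_of_mem ha, h⟩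
      · exact absurd ⟨a, ha, h⟩ ht
      · exact ⟨G.tgt e, Finset.mem_insert_self _ _, h⟩

theorem reach_of_reach_or_reach {u₁ u₂ : V} (hu : ∀ x, G.Reach F x u₁ ∨ G.Reach F x u₂)
    (h : G.Reach F u₁ u₂) (x y : V) : G.Reach F x y := by
  have hx₁ : ∀ x, G.Reach F x u₁ := fun x => (hu x).elim id (·.trans h.symm)
  exact (hx₁ x).trans (hx₁ y).symm

theorem card_le_card_add_two [Fintype V] {u₁ u₂ : V}
    (hu : ∀ x, G.Reach F x u₁ ∨ G.Reach F x u₂) : Fintype.card V ≤ F.card + 2 := by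
  classical
  refine (G.card_le_card_add_card_of_reach F {u₁, u₂} fun x => ?_).trans
    (Nat.add_le_add_left Finset.card_le_two _)
  simpa using hu x

theorem card_le_card_add_one [Fintype V] {u₁ u₂ : V}
    (hu : ∀ x, G.Reach F x u₁ ∨ G.Reach F x u₂) (h : G.Reach F u₁ u₂) :
    Fintype.card V ≤ F.card + 1 := by
  simpa using G.card_le_card_add_card_of_reach F {u₁} fun x =>
    ⟨u₁, Finset.mem_singleton_self _, G.reach_of_reach_or_reach hu h x u₁⟩

theorem isSpanningTree_iff [Fintype V] (u₁ u₂ : V) :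
    G.IsSpanningTree F ↔ (∀ x, G.Reach F x u₁ ∨ G.Reach F x u₂) ∧ G.Reach F u₁ u₂ ∧
      F.card + 1 = Fintype.card V :=
  ⟨fun ⟨hF, hcard⟩ => ⟨fun x => Or.inl (hF x u₁), hF u₁ u₂, hcard⟩,
    fun ⟨hu, h, hcard⟩ => ⟨G.reach_of_reach_or_reach hu h, hcard⟩⟩

theorem IsSpanningTree.card_eq_one_of_isSpanningForest [Fintype V] {G : Multigraph E V}
    {parts : Finset (Finset V)} (hT : G.IsSpanningTree F) (hF : G.IsSpanningForest parts F) :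
    parts.card = 1 := by
  have := hT.2
  have := hF.1
  omega

theorem isSpanningForest_pair_iff [Fintype V] [DecidableEq V] {u₁ u₂ : V} (hu : u₁ ≠ u₂) :
    G.IsSpanningForest {{u₁}, {u₂}} F ↔ (∀ x, G.Reach F x u₁ ∨ G.Reach F x u₂) ∧
      ¬ G.Reach F u₁ u₂ ∧ F.card + 2 = Fintype.card V := by
  have hpair : ({u₁} : Finset V) ≠ {u₂} := by simpa using hu
  have hsymm : G.Reach F u₂ u₁ ↔ G.Reach F u₁ u₂ := ⟨Reach.symm, Reach.symm⟩
  have hrefl (u : V) : G.Reach F u u := .refl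
  simp only [IsSpanningForest, Finset.card_pair hpair, Finset.mem_insert, Finset.mem_singleton,
    forall_eq_or_imp, forall_eq, hrefl, and_self, ne_eq, not_true_eq_false, imp_self,
    Finset.singleton_inj, hu, not_false_eq_true, forall_const, true_and, hu.symm, hsymm, and_true,
    exists_eq_or_imp, exists_eq_left, ↓existsAndEq]
  tauto

section Interface

variable {E E' V : Type*} {S S' : Finset V} {H : Multigraph E S} {H' : Multigraph E' S'}
  {F : Finset E} {F' : Finset E'} {R : V → V → Prop}

theorem reach_or_exists_reach_of_reflTransGen
    (hR : ∀ a c, R a c → (∃ ha hc, H.Adj F ⟨a, ha⟩ ⟨c, hc⟩) ∨ a ∈ S') {x : S} {b : V}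
    (hb : b ∈ S) (h : Relation.ReflTransGen R x b) :
    H.Reach F x ⟨b, hb⟩ ∨ ∃ s : S, ↑s ∈ S' ∧ H.Reach F x s := by
  suffices ∀ b, Relation.ReflTransGen R x b →
      (∃ hb : b ∈ S, H.Reach F x ⟨b, hb⟩) ∨ ∃ s : S, ↑s ∈ S' ∧ H.Reach F x s from
    (this b h).imp_left fun ⟨_, h⟩ => h
  intro b h
  induction h with
  | refl => exact Or.inl ⟨x.2, .refl⟩
  | tail _ hbc ih =>
    rcases ih with ⟨hb, hxb⟩ | hs
    · rcases hR _ _ hbc with ⟨_, hc, hadj⟩ | hb'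
      · exact Or.inl ⟨hc, hxb.tail hadj⟩
      · exact Or.inr ⟨⟨_, hb⟩, hb', hxb⟩
    · exact Or.inr hs

theorem reach_or_reach_of_reflTransGen [DecidableEq V] {v₁ v₂ : V}
    (hR : ∀ a c, R a c → (∃ ha hc, H.Adj F ⟨a, ha⟩ ⟨c, hc⟩) ∨ a ∈ S')
    (hS : S ∩ S' = {v₁, v₂}) (h₁ : v₁ ∈ S) (h₂ : v₂ ∈ S) (x : S)
    (hx : Relation.ReflTransGen R x v₁) : H.Reach F x ⟨v₁, h₁⟩ ∨ H.Reach F x ⟨v₂, h₂⟩ := by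
  rcases reach_or_exists_reach_of_reflTransGen hR h₁ hx with h | ⟨⟨s, hsS⟩, hsS', hxs⟩
  · exact Or.inl h
  · have : s = v₁ ∨ s = v₂ := by simpa [hS] using Finset.mem_inter.2 ⟨hsS, hsS'⟩
    rcases this with rfl | rfl
    exacts [Or.inl hxs, Or.inr hxs]

theorem exists_reach_of_adj_of_reach_iff {u : S} {w : S'}
    (hSS' : ∀ a (ha : a ∈ S) (ha' : a ∈ S'), H.Reach F ⟨a, ha⟩ u ↔ H'.Reach F' ⟨a, ha'⟩ w)
    {a c : V} {ha : a ∈ S} {hc : c ∈ S} (hac : H.Adj F ⟨a, ha⟩ ⟨c, hc⟩)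
    (h : (∃ ha, H.Reach F ⟨a, ha⟩ u) ∨ ∃ ha, H'.Reach F' ⟨a, ha⟩ w) :
    (∃ hc, H.Reach F ⟨c, hc⟩ u) ∨ ∃ hc, H'.Reach F' ⟨c, hc⟩ w := by
  have hau : H.Reach F ⟨a, ha⟩ u := h.elim (fun ⟨_, h⟩ => h) fun ⟨ha', h⟩ => (hSS' a ha ha').2 h
  exact Or.inl ⟨hc, hau.head hac.symm⟩

/-- If `H` and `H'` induce the same partition of their common vertices into those joined to
`u` and the rest, so does every path that alternates between them. -/
theorem exists_reach_of_reflTransGen_of_reach_iff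
    (hR : ∀ a c, R a c →
      (∃ ha hc, H.Adj F ⟨a, ha⟩ ⟨c, hc⟩) ∨ ∃ ha hc, H'.Adj F' ⟨a, ha⟩ ⟨c, hc⟩)
    {u : S} {w : S'}
    (hSS' : ∀ a (ha : a ∈ S) (ha' : a ∈ S'), H.Reach F ⟨a, ha⟩ u ↔ H'.Reach F' ⟨a, ha'⟩ w)
    {b : V} (h : Relation.ReflTransGen R u b) :
    (∃ hb, H.Reach F ⟨b, hb⟩ u) ∨ ∃ hb, H'.Reach F' ⟨b, hb⟩ w := by
  induction h with
  | refl => exact Or.inl ⟨u.2, .refl⟩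
  | tail _ hbc ih =>
    rcases hR _ _ hbc with ⟨_, _, hadj⟩ | ⟨_, _, hadj⟩
    · exact exists_reach_of_adj_of_reach_iff hSS' hadj ih
    · exact (exists_reach_of_adj_of_reach_iff (fun a ha' ha => (hSS' a ha ha').symm) hadj
        ih.symm).symm

theorem reach_or_reach_of_reflTransGen_pair [DecidableEq V] {v₁ v₂ : V}
    (hR : ∀ a c, R a c →
      (∃ ha hc, H.Adj F ⟨a, ha⟩ ⟨c, hc⟩) ∨ ∃ ha hc, H'.Adj F' ⟨a, ha⟩ ⟨c, hc⟩)
    (hS : S ∩ S' = {v₁, v₂}) (h₁ : v₁ ∈ S) (h₂ : v₂ ∈ S) (h₁' : v₁ ∈ S') (h₂' : v₂ ∈ S')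
    (h : Relation.ReflTransGen R v₁ v₂) :
    H.Reach F ⟨v₁, h₁⟩ ⟨v₂, h₂⟩ ∨ H'.Reach F' ⟨v₁, h₁'⟩ ⟨v₂, h₂'⟩ := by
  by_contra! hne
  have hSS' : ∀ a (ha : a ∈ S) (ha' : a ∈ S'),
      H.Reach F ⟨a, ha⟩ ⟨v₁, h₁⟩ ↔ H'.Reach F' ⟨a, ha'⟩ ⟨v₁, h₁'⟩ := by
    intro a ha ha'
    have : a = v₁ ∨ a = v₂ := by simpa [hS] using Finset.mem_inter.2 ⟨ha, ha'⟩
    rcases this with rfl | rfl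
    · exact iff_of_true .refl .refl
    · exact iff_of_false (fun h => hne.1 h.symm) fun h => hne.2 h.symm
  rcases exists_reach_of_reflTransGen_of_reach_iff hR hSS' h with ⟨_, h⟩ | ⟨_, h⟩
  · exact hne.1 h.symm
  · exact hne.2 h.symm

end Interface

section Glue

variable {E₁ E₂ V : Type*} {S₁ S₂ : Finset V}

def glue (G₁ : Multigraph E₁ S₁) (G₂ : Multigraph E₂ S₂) : Multigraph (E₁ ⊕ E₂) V where
  src := Sum.elim (fun e => G₁.src e) fun e => G₂.src e
  tgt := Sum.elim (fun e => G₁.tgt e) fun e => G₂.tgt e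

variable {G₁ : Multigraph E₁ S₁} {G₂ : Multigraph E₂ S₂} {T₁ : Finset E₁} {T₂ : Finset E₂}

theorem eq_glue {G : Multigraph (E₁ ⊕ E₂) V} (hsrc₁ : ∀ e, G.src (.inl e) = G₁.src e)
    (htgt₁ : ∀ e, G.tgt (.inl e) = G₁.tgt e) (hsrc₂ : ∀ e, G.src (.inr e) = G₂.src e)
    (htgt₂ : ∀ e, G.tgt (.inr e) = G₂.tgt e) : G = G₁.glue G₂ := by
  obtain ⟨src, tgt⟩ := G
  congr 1 <;> funext e <;> cases e
  exacts [hsrc₁ _, hsrc₂ _, htgt₁ _, htgt₂ _]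

theorem adj_glue {a c : V} (h : (G₁.glue G₂).Adj (T₁.disjSum T₂) a c) :
    (∃ ha hc, G₁.Adj T₁ ⟨a, ha⟩ ⟨c, hc⟩) ∨ ∃ ha hc, G₂.Adj T₂ ⟨a, ha⟩ ⟨c, hc⟩ := by
  obtain ⟨e | e, he, ⟨rfl, rfl⟩ | ⟨rfl, rfl⟩⟩ := h <;> simp only [Finset.inl_mem_disjSum,
    Finset.inr_mem_disjSum] at he
  · exact Or.inl ⟨_, _, e, he, Or.inl ⟨rfl, rfl⟩⟩
  · exact Or.inl ⟨_, _, e, he, Or.inr ⟨rfl, rfl⟩⟩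
  · exact Or.inr ⟨_, _, e, he, Or.inl ⟨rfl, rfl⟩⟩
  · exact Or.inr ⟨_, _, e, he, Or.inr ⟨rfl, rfl⟩⟩

theorem Reach.glue_left {x y : S₁} (h : G₁.Reach T₁ x y) :
    (G₁.glue G₂).Reach (T₁.disjSum T₂) x y :=
  h.map Subtype.val Sum.inl (fun _ => rfl) (fun _ => rfl) fun _ => Finset.inl_mem_disjSum.2

theorem Reach.glue_right {x y : S₂} (h : G₂.Reach T₂ x y) :
    (G₁.glue G₂).Reach (T₁.disjSum T₂) x y :=
  h.map Subtype.val Sum.inr (fun _ => rfl) (fun _ => rfl) fun _ => Finset.inr_mem_disjSum.2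

variable [DecidableEq V] {v₁ v₂ : V}

theorem forall_reach_glue_iff [Fintype V] (hcover : S₁ ∪ S₂ = Finset.univ) (hS : S₁ ∩ S₂ = {v₁, v₂})
    (h₁₁ : v₁ ∈ S₁) (h₁₂ : v₁ ∈ S₂) (h₂₁ : v₂ ∈ S₁) (h₂₂ : v₂ ∈ S₂) :
    (∀ a b, (G₁.glue G₂).Reach (T₁.disjSum T₂) a b) ↔
      (∀ x, G₁.Reach T₁ x ⟨v₁, h₁₁⟩ ∨ G₁.Reach T₁ x ⟨v₂, h₂₁⟩) ∧
      (∀ x, G₂.Reach T₂ x ⟨v₁, h₁₂⟩ ∨ G₂.Reach T₂ x ⟨v₂, h₂₂⟩) ∧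
      (G₁.Reach T₁ ⟨v₁, h₁₁⟩ ⟨v₂, h₂₁⟩ ∨ G₂.Reach T₂ ⟨v₁, h₁₂⟩ ⟨v₂, h₂₂⟩) := by
  constructor
  · intro h
    refine ⟨fun x => reach_or_reach_of_reflTransGen (fun _ _ hac => ?_) hS h₁₁ h₂₁ x (h x v₁),
      fun x => reach_or_reach_of_reflTransGen (fun _ _ hac => ?_)
        (by rwa [Finset.inter_comm]) h₁₂ h₂₂ x (h x v₁),
      reach_or_reach_of_reflTransGen_pair (fun _ _ => adj_glue) hS h₁₁ h₂₁ h₁₂ h₂₂ (h v₁ v₂)⟩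
    · exact (adj_glue hac).imp_right fun ⟨ha, _⟩ => ha
    · exact (adj_glue hac).symm.imp_right fun ⟨ha, _⟩ => ha
  · rintro ⟨h₁, h₂, hlink⟩
    refine reach_of_reach_or_reach _ (u₁ := v₁) (u₂ := v₂) (fun a => ?_)
      (hlink.elim Reach.glue_left Reach.glue_right)
    rcases Finset.mem_union.1 (hcover ▸ Finset.mem_univ a : a ∈ S₁ ∪ S₂) with ha | ha
    · exact (h₁ ⟨a, ha⟩).imp Reach.glue_left Reach.glue_left
    · exact (h₂ ⟨a, ha⟩).imp Reach.glue_right Reach.glue_right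

theorem card_add_card_of_inter_eq_pair [Fintype V] (hcover : S₁ ∪ S₂ = Finset.univ)
    (hS : S₁ ∩ S₂ = {v₁, v₂}) (hv : v₁ ≠ v₂) :
    Fintype.card S₁ + Fintype.card S₂ = Fintype.card V + 2 := by
  simpa [hcover, hS, hv, eq_comm] using Finset.card_union_add_card_inter S₁ S₂

theorem isSpanningTree_glue_disjSum_iff [Fintype V] (hcover : S₁ ∪ S₂ = Finset.univ)
    (hS : S₁ ∩ S₂ = {v₁, v₂}) (hv : v₁ ≠ v₂)
    (h₁₁ : v₁ ∈ S₁) (h₁₂ : v₁ ∈ S₂) (h₂₁ : v₂ ∈ S₁) (h₂₂ : v₂ ∈ S₂) :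
    (G₁.glue G₂).IsSpanningTree (T₁.disjSum T₂) ↔
      (G₁.IsSpanningForest {{⟨v₁, h₁₁⟩}, {⟨v₂, h₂₁⟩}} T₁ ∧ G₂.IsSpanningTree T₂) ∨
      (G₁.IsSpanningTree T₁ ∧ G₂.IsSpanningForest {{⟨v₁, h₁₂⟩}, {⟨v₂, h₂₂⟩}} T₂) := by
  have hcard := card_add_card_of_inter_eq_pair hcover hS hv
  rw [IsSpanningTree, forall_reach_glue_iff hcover hS h₁₁ h₁₂ h₂₁ h₂₂, Finset.card_disjSum,
    G₁.isSpanningTree_iff ⟨v₁, h₁₁⟩ ⟨v₂, h₂₁⟩, G₂.isSpanningTree_iff ⟨v₁, h₁₂⟩ ⟨v₂, h₂₂⟩,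
    G₁.isSpanningForest_pair_iff (by simpa using hv),
    G₂.isSpanningForest_pair_iff (by simpa using hv)]
  constructor
  · rintro ⟨⟨hu₁, hu₂, hlink₁ | hlink₂⟩, hT⟩
    · have := G₁.card_le_card_add_one hu₁ hlink₁
      have := G₂.card_le_card_add_two hu₂
      refine Or.inr ⟨⟨hu₁, hlink₁, by omega⟩, hu₂, fun hlink₂ => ?_, by omega⟩
      have := G₂.card_le_card_add_one hu₂ hlink₂
      omega
    · have := G₂.card_le_card_add_one hu₂ hlink₂
      have := G₁.card_le_card_add_two hu₁
      refine Or.inl ⟨⟨hu₁, fun hlink₁ => ?_, by omega⟩, hu₂, hlink₂, by omega⟩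
      have := G₁.card_le_card_add_one hu₁ hlink₁
      omega
  · rintro (⟨⟨hu₁, -, hT₁⟩, hu₂, hlink₂, hT₂⟩ | ⟨⟨hu₁, hlink₁, hT₁⟩, hu₂, -, hT₂⟩)
    · exact ⟨⟨hu₁, hu₂, Or.inr hlink₂⟩, by omega⟩
    · exact ⟨⟨hu₁, hu₂, Or.inl hlink₁⟩, by omega⟩

end Glue

open MvPolynomial

section ComplementPoly

variable {E E₁ E₂ : Type*} [Fintype E] [DecidableEq E] [Fintype E₁] [DecidableEq E₁]
  [Fintype E₂] [DecidableEq E₂]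

open Classical in
noncomputable def complementPoly (P : Finset E → Prop) : MvPolynomial E ℚ :=
  ∑ T : Finset E, if P T then ∏ e ∈ Tᶜ, X e else 0

theorem kirchhoff_eq_complementPoly {V : Type*} [Fintype V] (G : Multigraph E V) :
    G.kirchhoff = complementPoly G.IsSpanningTree :=
  rfl

theorem forestPoly_eq_complementPoly {V : Type*} [Fintype V] (G : Multigraph E V)
    (parts : Finset (Finset V)) :
    G.forestPoly parts = complementPoly (G.IsSpanningForest parts) :=
  rfl

theorem complementPoly_congr {P Q : Finset E → Prop} (h : ∀ T, P T ↔ Q T) :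
    complementPoly P = complementPoly Q := by
  obtain rfl : P = Q := funext fun T => propext (h T)
  rfl

theorem complementPoly_or {P Q : Finset E → Prop} (h : ∀ T, ¬ (P T ∧ Q T)) :
    complementPoly (fun T => P T ∨ Q T) = complementPoly P + complementPoly Q := by
  classical
  simp only [complementPoly, ← Finset.sum_add_distrib]
  refine Finset.sum_congr rfl fun T _ => ?_
  by_cases hP : P T
  · have hQ : ¬ Q T := fun hQ => h T ⟨hP, hQ⟩
    simp [hP, hQ]
  · simp [hP]

theorem rename_inl_mul_rename_inr (P : Finset E₁ → Prop) (Q : Finset E₂ → Prop) :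
    rename Sum.inl (complementPoly P) * rename Sum.inr (complementPoly Q) =
      complementPoly fun T : Finset (E₁ ⊕ E₂) => P T.toLeft ∧ Q T.toRight := by
  classical
  have hcompl (T₁ : Finset E₁) (T₂ : Finset E₂) : (T₁.disjSum T₂)ᶜ = T₁ᶜ.disjSum T₂ᶜ := by
    ext (e | e) <;> simp
  rw [complementPoly, complementPoly, complementPoly,
    ← Finset.sumEquiv.symm.toEquiv.sum_comp, Fintype.sum_prod_type, map_sum, map_sum,
    Finset.sum_mul_sum]
  refine Finset.sum_congr rfl fun T₁ _ => Finset.sum_congr rfl fun T₂ _ => ?_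
  have hT : Finset.sumEquiv.symm.toEquiv (T₁, T₂) = T₁.disjSum T₂ := rfl
  simp only [hT, Finset.toLeft_disjSum, Finset.toRight_disjSum, hcompl, Finset.prod_disjSum,
    ← ite_zero_mul_ite_zero, apply_ite (rename _), map_prod, rename_X, map_zero]

end ComplementPoly

end Multigraph

open MvPolynomial in
theorem two_vertex_join_kirchhoff_general {E1 E2 V : Type*} [Fintype E1] [DecidableEq E1]
    [Fintype E2] [DecidableEq E2] [Fintype V] [DecidableEq V]
    (S1 S2 : Finset V) (v1 v2 : V) (hv : v1 ≠ v2)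
    (hcover : S1 ∪ S2 = Finset.univ) (hinter : S1 ∩ S2 = {v1, v2})
    (h11 : v1 ∈ S1) (h12 : v1 ∈ S2) (h21 : v2 ∈ S1) (h22 : v2 ∈ S2)
    (G1 : Multigraph E1 ↥S1) (G2 : Multigraph E2 ↥S2) (G : Multigraph (E1 ⊕ E2) V)
    (hsrc1 : ∀ e, G.src (Sum.inl e) = ↑(G1.src e))
    (htgt1 : ∀ e, G.tgt (Sum.inl e) = ↑(G1.tgt e))
    (hsrc2 : ∀ e, G.src (Sum.inr e) = ↑(G2.src e))
    (htgt2 : ∀ e, G.tgt (Sum.inr e) = ↑(G2.tgt e)) :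
    G.kirchhoff
      = rename Sum.inl
          (G1.forestPoly {({⟨v1, h11⟩} : Finset ↥S1), ({⟨v2, h21⟩} : Finset ↥S1)})
        * rename Sum.inr G2.kirchhoff
      + rename Sum.inl G1.kirchhoff
        * rename Sum.inr
          (G2.forestPoly {({⟨v1, h12⟩} : Finset ↥S2), ({⟨v2, h22⟩} : Finset ↥S2)}) := by
  obtain rfl := Multigraph.eq_glue hsrc1 htgt1 hsrc2 htgt2
  have hsplit (T : Finset (E1 ⊕ E2)) :
      (G1.glue G2).IsSpanningTree T ↔
        (G1.IsSpanningForest {{⟨v1, h11⟩}, {⟨v2, h21⟩}} T.toLeft ∧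
          G2.IsSpanningTree T.toRight) ∨
        (G1.IsSpanningTree T.toLeft ∧
          G2.IsSpanningForest {{⟨v1, h12⟩}, {⟨v2, h22⟩}} T.toRight) := by
    simpa only [Finset.toLeft_disjSum_toRight] using Multigraph.isSpanningTree_glue_disjSum_iff
      (T₁ := T.toLeft) (T₂ := T.toRight) hcover hinter hv h11 h12 h21 h22
  rw [Multigraph.kirchhoff_eq_complementPoly, Multigraph.complementPoly_congr hsplit,
    Multigraph.complementPoly_or, Multigraph.kirchhoff_eq_complementPoly,
    Multigraph.kirchhoff_eq_complementPoly, Multigraph.forestPoly_eq_complementPoly,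
    Multigraph.forestPoly_eq_complementPoly, Multigraph.rename_inl_mul_rename_inr,
    Multigraph.rename_inl_mul_rename_inr]
  rintro T ⟨⟨hF, -⟩, hT, -⟩
  simpa [hv] using hT.card_eq_one_of_isSpanningForest hF

open MvPolynomial in
/-- **two-vertex join factorization.**  Let `G` be glued from `G₁` (on the
vertex set `S₁`, with edges `E₁`) and `G₂` (on `S₂`, with edges `E₂`) along
`S₁ ∩ S₂ = {v₁, v₂}`.  Then
`Ψ_G = Φ^{{v₁},{v₂}}_{G₁} · Ψ_{G₂} + Ψ_{G₁} · Φ^{{v₁},{v₂}}_{G₂}`. -/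
theorem two_vertex_join_kirchhoff {E1 E2 V : Type*} [Fintype E1] [DecidableEq E1]
    [Fintype E2] [DecidableEq E2] [Fintype V] [DecidableEq V]
    (S1 S2 : Finset V) (v1 v2 : V) (hv : v1 ≠ v2)
    (hcover : S1 ∪ S2 = Finset.univ) (hinter : S1 ∩ S2 = {v1, v2})
    (h11 : v1 ∈ S1) (h12 : v1 ∈ S2) (h21 : v2 ∈ S1) (h22 : v2 ∈ S2)
    (G1 : Multigraph E1 ↥S1) (G2 : Multigraph E2 ↥S2) (G : Multigraph (E1 ⊕ E2) V)
    (hsrc1 : ∀ e, G.src (Sum.inl e) = ↑(G1.src e))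
    (htgt1 : ∀ e, G.tgt (Sum.inl e) = ↑(G1.tgt e))
    (hsrc2 : ∀ e, G.src (Sum.inr e) = ↑(G2.src e))
    (htgt2 : ∀ e, G.tgt (Sum.inr e) = ↑(G2.tgt e))
    (hconn : G.Connected) :
    G.kirchhoff
      = rename Sum.inl
          (G1.forestPoly {({⟨v1, h11⟩} : Finset ↥S1), ({⟨v2, h21⟩} : Finset ↥S1)})
        * rename Sum.inr G2.kirchhoff
      + rename Sum.inl G1.kirchhoff
        * rename Sum.inr
          (G2.forestPoly {({⟨v1, h12⟩} : Finset ↥S2), ({⟨v2, h22⟩} : Finset ↥S2)}) :=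
  two_vertex_join_kirchhoff_general S1 S2 v1 v2 hv hcover hinter h11 h12 h21 h22 G1 G2 G hsrc1 htgt1
    hsrc2 htgt2
end

section
/- The Plücker-type identity for Dodgson polynomials: for any four distinct edges i, j, k, l of a connected graph G, with consistent sign choices, Ψ^{ij,kl}_G - Ψ^{ik,jl}_G + Ψ^{il,jk}_G = 0. -/
namespace Multigraph

variable {E V : Type*}

/-- The matrix `M_G(·,·)_K`: the reduced block matrix `[[A, 𝓔],[-𝓔ᵀ, 0]]` (one vertex `v0`
removed) in which the variables of the edges in `K` have been set to `0`. -/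
noncomputable def bigMatK (G : Multigraph E V) [DecidableEq E] [DecidableEq V] (v0 : V) (K : Finset E) :
    Matrix (E ⊕ {v : V // v ≠ v0}) (E ⊕ {v : V // v ≠ v0}) (MvPolynomial E ℚ) :=
  Matrix.fromBlocks (Matrix.diagonal fun e => if e ∈ K then 0 else MvPolynomial.X e)
    (Matrix.of fun e (v : {v : V // v ≠ v0}) => G.inc (MvPolynomial E ℚ) e ↑v)
    (Matrix.of fun (v : {v : V // v ≠ v0}) e => -G.inc (MvPolynomial E ℚ) e ↑v)
    0

/-- The Dodgson polynomial `Ψ^{I,J}_{G,K}`: the determinant of `M_G` with the rows indexed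
by `I` and the columns indexed by `J` deleted and the variables of `K` set to zero.  The
rows and columns are enumerated in increasing order, which fixes the sign. -/
noncomputable def dodgson (G : Multigraph E V) [Fintype E] [LinearOrder E] [Fintype V]
    [DecidableEq V] (v0 : V) (I J K : Finset E) : MvPolynomial E ℚ :=
  if h : I.card = J.card then
    Matrix.det (Matrix.of fun r c : Fin (Iᶜ.card) ⊕ {v : V // v ≠ v0} =>
      G.bigMatK v0 K
        (Sum.map (fun i => ((Iᶜ.orderIsoOfFin rfl) i : E)) id r)
        (Sum.map (fun j => ((Jᶜ.orderIsoOfFin (by simp [Finset.card_compl, h])) j : E)) id c))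
  else 0

/-- The determinant of the square submatrix of the reduced signed incidence matrix of `G`
(with the column of the vertex `v0` removed) given by the rows indexed by the edge set `S`
(rows and columns enumerated in increasing order); junk value `0` if `S` does not have
`|V| - 1` elements. -/
noncomputable def rowDet (G : Multigraph E V) [Fintype E] [LinearOrder E] [Fintype V]
    [LinearOrder V] (v0 : V) (S : Finset E) : ℚ :=
  if h : S.card = Fintype.card V - 1 then
    Matrix.det (Matrix.of fun i j : Fin (Fintype.card V - 1) =>
      G.inc ℚ ((S.orderIsoOfFin h) i : E)
        (((Finset.univ.erase v0).orderIsoOfFin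
          (by rw [Finset.card_erase_of_mem (Finset.mem_univ v0), Finset.card_univ])) j : V))
  else 0

/-- `𝓔_G(S)`: the determinant of the reduced incidence matrix with the rows `S` deleted
(and the column of `v0` deleted). -/
noncomputable def detE (G : Multigraph E V) [Fintype E] [LinearOrder E] [Fintype V]
    [LinearOrder V] (v0 : V) (S : Finset E) : ℚ :=
  G.rowDet v0 Sᶜ

end Multigraph

/-!
Write `M` for `G.bigMatK v0 ∅`. Up to sign, `Ψ^{ab,cd}` is the determinant of `M` with rows
`a, b` replaced by the unit rows `e_c, e_d`, and the Desnanot–Jacobi identity turns `det M` times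
this into `adj(M)_{ca} adj(M)_{db} - adj(M)_{cb} adj(M)_{da}`. As `Mᵀ = D M D` for
`D = diag(1, -1)`, the adjugate is symmetric on the edge block, and with this symmetry the
alternating sum of the three right-hand sides cancels. Finally `det M ≠ 0`: at `α = 1` it becomes
`det (𝓔ᵀ 𝓔)`, and the reduced incidence matrix `𝓔` of a connected graph has trivial kernel.
-/

lemma bijective_sumElim_pair {ι κ : Type*} {ρ : κ → ι} {a b : ι} (hρ : Function.Injective ρ)
    (hab : a ≠ b) (hrange : Set.range ρ = ({a, b} : Set ι)ᶜ) :
    Function.Bijective (Sum.elim ρ ![a, b]) := by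
  have hρab : ∀ p, ρ p ≠ a ∧ ρ p ≠ b := fun p => by
    simpa using hrange.subset (Set.mem_range_self p)
  refine ⟨hρ.sumElim (fun i j h => ?_) fun p i => ?_, fun x => ?_⟩
  · fin_cases i <;> fin_cases j <;> simp_all [eq_comm]
  · fin_cases i <;> simp [hρab p]
  · by_cases hx : x = a ∨ x = b
    · rcases hx with rfl | rfl
      exacts [⟨Sum.inr 0, rfl⟩, ⟨Sum.inr 1, rfl⟩]
    · obtain ⟨p, rfl⟩ : x ∈ Set.range ρ := by simpa [hrange] using hx
      exact ⟨Sum.inl p, rfl⟩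

namespace Matrix

section SquareMatrix

variable {ι : Type*} [Fintype ι] [DecidableEq ι] {R : Type*} [CommRing R]

lemma det_updateRow_updateRow_smul_one (t : R) {a b : ι} (hab : a ≠ b) (u v : ι → R) :
    (((t • (1 : Matrix ι ι R)).updateRow a u).updateRow b v).det
      = t ^ (Fintype.card ι - 2) * (u a * v b - u b * v a) := by
  let κ := {x // x ∉ ({a, b} : Set ι)}
  let e : κ ⊕ Fin 2 ≃ ι :=
    Equiv.ofBijective _ (bijective_sumElim_pair Subtype.val_injective hab Subtype.range_coe)
  have hcard : Fintype.card κ = Fintype.card ι - 2 := by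
    have := Fintype.card_congr e
    simp only [Fintype.card_sum, Fintype.card_fin] at this
    omega
  have hblocks : (((t • (1 : Matrix ι ι R)).updateRow a u).updateRow b v).submatrix e e =
      fromBlocks (t • 1) 0 (of fun i (p : κ) => ![u, v] i p) !![u a, u b; v a, v b] := by
    ext (p | i) (q | j)
    · have hp : (p : ι) ≠ a ∧ (p : ι) ≠ b := by simpa [not_or] using p.2
      simp [e, updateRow_apply, one_apply, hp, Subtype.coe_inj]
    · have hp : (p : ι) ≠ a ∧ (p : ι) ≠ b := by simpa [not_or] using p.2
      fin_cases j <;> simp [e, updateRow_apply, hp]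
    · fin_cases i <;> simp [e, updateRow_apply, hab]
    · fin_cases i <;> fin_cases j <;> simp [e, updateRow_apply, hab]
  rw [← det_submatrix_equiv_self e, hblocks, det_fromBlocks_zero₁₂, det_smul, det_one, mul_one,
    det_fin_two_of, hcard]

/-- Up to sign, the minor of `A` with rows `a, b` and columns `c, d` deleted
(`exists_det_submatrix_eq_units_mul_pairCofactor`); `adjugate_apply` is the one-row analogue. -/
def pairCofactor (A : Matrix ι ι R) (a b c d : ι) : R :=
  ((A.updateRow a (Pi.single c 1)).updateRow b (Pi.single d 1)).det

/-- The Desnanot–Jacobi identity. -/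
lemma det_pow_mul_pairCofactor (A : Matrix ι ι R) {a b : ι} (hab : a ≠ b) (c d : ι) :
    A.det ^ (Fintype.card ι - 1) * A.pairCofactor a b c d
      = A.det ^ (Fintype.card ι - 2) *
        (A.adjugate c a * A.adjugate d b - A.adjugate c b * A.adjugate d a) := by
  have hmul : (A.updateRow a (Pi.single c 1)).updateRow b (Pi.single d 1) * A.adjugate
      = ((A.det • (1 : Matrix ι ι R)).updateRow a (A.adjugate c)).updateRow b (A.adjugate d) := by
    simp only [updateRow_mul, mul_adjugate, single_vecMul, one_smul]
    rfl
  have hdet := congrArg det hmul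
  rw [det_mul, det_adjugate, det_updateRow_updateRow_smul_one _ hab] at hdet
  rw [pairCofactor, mul_comm, hdet]

lemma det_mul_pairCofactor [IsDomain R] (A : Matrix ι ι R) (hA : A.det ≠ 0) {a b : ι}
    (hab : a ≠ b) (c d : ι) :
    A.det * A.pairCofactor a b c d
      = A.adjugate c a * A.adjugate d b - A.adjugate c b * A.adjugate d a := by
  have hcard : Fintype.card ι - 1 = Fintype.card ι - 2 + 1 := by
    have := Fintype.one_lt_card_iff_nontrivial.mpr ⟨a, b, hab⟩
    omega
  have h := det_pow_mul_pairCofactor A hab c d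
  rw [hcard, pow_succ, mul_assoc] at h
  exact mul_left_cancel₀ (pow_ne_zero _ hA) h

lemma pairCofactor_plucker [IsDomain R] (A : Matrix ι ι R) (hA : A.det ≠ 0) {i j k l : ι}
    (hij : i ≠ j) (hik : i ≠ k) (hil : i ≠ l) (hjk : A.adjugate j k = A.adjugate k j)
    (hjl : A.adjugate j l = A.adjugate l j) (hkl : A.adjugate k l = A.adjugate l k) :
    A.pairCofactor i j k l - A.pairCofactor i k j l + A.pairCofactor i l j k = 0 := by
  refine mul_left_cancel₀ hA ?_
  linear_combination det_mul_pairCofactor A hA hij k l - det_mul_pairCofactor A hA hik j l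
    + det_mul_pairCofactor A hA hil j k + A.adjugate j i * hkl - A.adjugate k i * hjl
    + A.adjugate l i * hjk

lemma exists_det_submatrix_eq_units_mul_pairCofactor {κ : Type*} [Fintype κ] [DecidableEq κ]
    (A : Matrix ι ι R) {ρ γ : κ → ι} (hρ : Function.Injective ρ) (hγ : Function.Injective γ)
    {a b c d : ι} (hab : a ≠ b) (hcd : c ≠ d) (hρr : Set.range ρ = ({a, b} : Set ι)ᶜ)
    (hγr : Set.range γ = ({c, d} : Set ι)ᶜ) :
    ∃ u : ℤˣ, (A.submatrix ρ γ).det = u * A.pairCofactor a b c d := by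
  let eρ : κ ⊕ Fin 2 ≃ ι := Equiv.ofBijective _ (bijective_sumElim_pair hρ hab hρr)
  let eγ : κ ⊕ Fin 2 ≃ ι := Equiv.ofBijective _ (bijective_sumElim_pair hγ hcd hγr)
  set B := (A.updateRow a (Pi.single c 1)).updateRow b (Pi.single d 1)
  have hblocks : B.submatrix eρ eγ =
      fromBlocks (A.submatrix ρ γ) (of fun p j => A (ρ p) (![c, d] j)) 0 1 := by
    have hρab : ∀ p, ρ p ≠ a ∧ ρ p ≠ b := fun p => by
      simpa using hρr.subset (Set.mem_range_self p)
    have hγcd : ∀ p, γ p ≠ c ∧ γ p ≠ d := fun p => by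
      simpa using hγr.subset (Set.mem_range_self p)
    ext (p | i) (q | j)
    · simp [B, eρ, eγ, hρab]
    · simp [B, eρ, eγ, hρab]
    · fin_cases i <;> simp [B, eρ, eγ, hab, (hγcd q).1.symm, (hγcd q).2.symm]
    · fin_cases i <;> fin_cases j <;> simp [B, eρ, eγ, hab, hcd, hcd.symm]
  have hperm : B.submatrix eρ eγ = (B.submatrix eγ eγ).submatrix (eρ.trans eγ.symm) id := by
    ext p q
    simp
  refine ⟨Equiv.Perm.sign (eρ.trans eγ.symm), ?_⟩
  rw [pairCofactor, ← det_submatrix_equiv_self eγ B, ← det_permute, ← hperm, hblocks,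
    det_fromBlocks_zero₂₁, det_one, mul_one]

lemma adjugate_transpose_eq_of_transpose_eq_conj {D M : Matrix ι ι R} (hD : D * D = 1)
    (hM : Mᵀ = D * M * D) : M.adjugateᵀ = D * M.adjugate * D := by
  have hadjD : D.adjugate = D.det • D := by
    rw [← Matrix.mul_one D.adjugate, ← hD, ← Matrix.mul_assoc, adjugate_mul, Matrix.smul_mul,
      Matrix.one_mul]
  have hdetD : D.det * D.det = 1 := by rw [← det_mul, hD, det_one]
  rw [adjugate_transpose, hM, adjugate_mul_distrib, adjugate_mul_distrib, hadjD]
  simp only [Matrix.smul_mul, Matrix.mul_smul, smul_smul, hdetD, one_smul, Matrix.mul_assoc]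

end SquareMatrix

lemma adjugate_fromBlocks_diagonal_neg_transpose_inl_comm {E W R : Type*} [Fintype E]
    [DecidableEq E] [Fintype W] [DecidableEq W] [CommRing R] (x : E → R) (N : Matrix E W R)
    (a b : E) :
    (fromBlocks (diagonal x) N (-Nᵀ) 0).adjugate (Sum.inl a) (Sum.inl b)
      = (fromBlocks (diagonal x) N (-Nᵀ) 0).adjugate (Sum.inl b) (Sum.inl a) := by
  let D : Matrix (E ⊕ W) (E ⊕ W) R := diagonal (Sum.elim 1 (-1))
  have hD : D * D = 1 := by
    rw [diagonal_mul_diagonal, ← diagonal_one]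
    congr 1
    ext (p | p) <;> simp
  have hsymm := adjugate_transpose_eq_of_transpose_eq_conj
    (M := fromBlocks (diagonal x) N (-Nᵀ) 0) hD (by
      ext (p | p) (q | q) <;> simp [D, diagonal_apply, eq_comm]
      split_ifs with h <;> simp [h])
  simpa [D] using congrFun₂ hsymm (Sum.inl b) (Sum.inl a)

lemma det_transpose_mul_self_ne_zero {m n K : Type*} [Fintype m] [Fintype n] [DecidableEq n]
    [Field K] [LinearOrder K] [IsStrictOrderedRing K] (P : Matrix m n K)
    (hP : ∀ v, P *ᵥ v = 0 → v = 0) : (Pᵀ * P).det ≠ 0 := by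
  intro h
  obtain ⟨v, hv, hPv⟩ := exists_mulVec_eq_zero_iff.mpr h
  have hker : v ∈ LinearMap.ker (Pᵀ * P).mulVecLin := hPv
  rw [ker_mulVecLin_transpose_mul_self] at hker
  exact hv (hP v hker)

end Matrix

namespace Finset

variable {E : Type*} [LinearOrder E]

lemma injective_sumMap_orderIsoOfFin {W : Type*} (S : Finset E) {k : ℕ} (h : S.card = k) :
    Function.Injective (Sum.map (fun i => (S.orderIsoOfFin h i : E)) (id : W → W)) :=
  (Subtype.val_injective.comp (S.orderIsoOfFin h).injective).sumMap Function.injective_id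

lemma range_sumMap_orderIsoOfFin_compl_pair {W : Type*} [Fintype E] (a b : E) {k : ℕ}
    (h : ({a, b} : Finset E)ᶜ.card = k) :
    Set.range (Sum.map (fun i => (({a, b} : Finset E)ᶜ.orderIsoOfFin h i : E)) (id : W → W))
      = ({Sum.inl a, Sum.inl b} : Set (E ⊕ W))ᶜ := by
  have hrange := range_orderEmbOfFin ({a, b} : Finset E)ᶜ h
  ext (x | w)
  · simp only [Set.mem_range, Sum.exists, Sum.map_inl, Sum.map_inr, Sum.inl.injEq, reduceCtorEq,
      exists_false, or_false, coe_orderIsoOfFin_apply]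
    rw [← Set.mem_range, hrange]
    simp [and_comm]
  · simp

end Finset

namespace Multigraph

open Matrix

variable {E V : Type*}

lemma Reach.apply_eq {α : Type*} {G : Multigraph E V} {F : Finset E} {f : V → α}
    (hf : ∀ e ∈ F, f (G.src e) = f (G.tgt e)) {x y : V} (h : G.Reach F x y) : f x = f y := by
  induction h with
  | refl => rfl
  | tail _ hadj ih =>
    obtain ⟨e, he, ⟨rfl, rfl⟩ | ⟨rfl, rfl⟩⟩ := hadj
    exacts [ih.trans (hf e he), ih.trans (hf e he).symm]

variable [DecidableEq V] (G : Multigraph E V)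

def reducedIncMatrix (R : Type*) [Ring R] (v0 : V) : Matrix E {v : V // v ≠ v0} R :=
  of fun e w => G.inc R e w

lemma map_inc {R S : Type*} [Ring R] [Ring S] (f : R →+* S) (e : E) (v : V) :
    f (G.inc R e v) = G.inc S e v := by
  simp [inc, apply_ite f]

lemma sum_inc_mul [Fintype V] {R : Type*} [Ring R] (e : E) (f : V → R) :
    ∑ v, G.inc R e v * f v = f (G.src e) - f (G.tgt e) := by
  simp [inc, sub_mul, Finset.sum_sub_distrib, ite_mul]

lemma reducedIncMatrix_mulVec_eq_zero [Fintype E] [Fintype V] {R : Type*} [Ring R]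
    (hconn : G.Connected) (v0 : V) {f : {v : V // v ≠ v0} → R}
    (hf : G.reducedIncMatrix R v0 *ᵥ f = 0) : f = 0 := by
  let F : V → R := fun x => if h : x = v0 then 0 else f ⟨x, h⟩
  have hF : ∀ e, (G.reducedIncMatrix R v0 *ᵥ f) e = F (G.src e) - F (G.tgt e) := by
    intro e
    rw [← sum_inc_mul, Fintype.sum_eq_add_sum_subtype_ne _ v0]
    simp only [F, reducedIncMatrix, mulVec, dotProduct, of_apply, dite_true,
      mul_zero, zero_add]
    exact Finset.sum_congr rfl fun w _ => by simp [w.2]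
  have hconst : ∀ x, F x = F v0 := fun x =>
    Reach.apply_eq (fun e _ => sub_eq_zero.mp ((hF e).symm.trans (congrFun hf e))) (hconn x v0)
  funext w
  simpa [F, w.2] using hconst w

lemma bigMatK_empty [Fintype E] [DecidableEq E] (v0 : V) :
    G.bigMatK v0 ∅ = fromBlocks (diagonal MvPolynomial.X)
      (G.reducedIncMatrix (MvPolynomial E ℚ) v0)
      (-(G.reducedIncMatrix (MvPolynomial E ℚ) v0)ᵀ) 0 := by
  simp only [bigMatK, Finset.notMem_empty, if_false]
  rfl

lemma adjugate_bigMatK_empty_inl_comm [Fintype E] [DecidableEq E] [Fintype V] (v0 : V)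
    (a b : E) :
    (G.bigMatK v0 ∅).adjugate (Sum.inl a) (Sum.inl b)
      = (G.bigMatK v0 ∅).adjugate (Sum.inl b) (Sum.inl a) := by
  rw [bigMatK_empty]
  exact adjugate_fromBlocks_diagonal_neg_transpose_inl_comm _ _ a b

lemma det_bigMatK_empty_ne_zero [Fintype E] [DecidableEq E] [Fintype V] (hconn : G.Connected)
    (v0 : V) : (G.bigMatK v0 ∅).det ≠ 0 := by
  let φ := MvPolynomial.eval (fun _ : E => (1 : ℚ))
  let P := G.reducedIncMatrix ℚ v0
  have hmap : (G.bigMatK v0 ∅).map φ = fromBlocks 1 P (-Pᵀ) 0 := by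
    rw [bigMatK_empty]
    ext (p | p) (q | q) <;>
      simp [φ, P, reducedIncMatrix, map_inc, diagonal_apply, one_apply, apply_ite]
  have hdet : φ (G.bigMatK v0 ∅).det = (Pᵀ * P).det := by
    rw [RingHom.map_det, RingHom.mapMatrix_apply, hmap, det_fromBlocks_one₁₁]
    simp
  intro h
  rw [h, map_zero] at hdet
  exact det_transpose_mul_self_ne_zero P
    (fun _ hv => G.reducedIncMatrix_mulVec_eq_zero hconn v0 hv) hdet.symm

lemma dodgson_pair_eq_smul_pairCofactor [Fintype E] [LinearOrder E] [Fintype V] (v0 : V)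
    {a b c d : E} (hab : a ≠ b) (hcd : c ≠ d) :
    ∃ s : ℚ, (s = 1 ∨ s = -1) ∧ G.dodgson v0 {a, b} {c, d} ∅ =
      s • (G.bigMatK v0 ∅).pairCofactor (Sum.inl a) (Sum.inl b) (Sum.inl c) (Sum.inl d) := by
  have hcard : ({a, b} : Finset E).card = ({c, d} : Finset E).card := by
    rw [Finset.card_pair hab, Finset.card_pair hcd]
  obtain ⟨u, hu⟩ := exists_det_submatrix_eq_units_mul_pairCofactor (G.bigMatK v0 ∅)
    (Finset.injective_sumMap_orderIsoOfFin _ _) (Finset.injective_sumMap_orderIsoOfFin _ _)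
    (Sum.inl_injective.ne hab) (Sum.inl_injective.ne hcd)
    (Finset.range_sumMap_orderIsoOfFin_compl_pair a b _)
    (Finset.range_sumMap_orderIsoOfFin_compl_pair c d _)
  rw [dodgson, dif_pos hcard]
  refine ⟨u, by rcases Int.units_eq_one_or u with rfl | rfl <;> simp, ?_⟩
  rw [Algebra.smul_def]
  exact hu

end Multigraph

/-- **Plücker identity for Dodgson polynomials.**  For any four distinct
edges `i, j, k, l` of a connected graph `G` there are consistent sign choices (the `ε`'s,
accounting for the sign ambiguity in the definition of Dodgson polynomials) with
`Ψ^{ij,kl}_G - Ψ^{ik,jl}_G + Ψ^{il,jk}_G = 0`. -/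
theorem dodgson_plucker {E V : Type*} [Fintype E] [LinearOrder E] [Fintype V]
    [DecidableEq V] (G : Multigraph E V) (hconn : G.Connected) (v0 : V)
    (i j k l : E) (hij : i ≠ j) (hik : i ≠ k) (hil : i ≠ l) (hjk : j ≠ k) (hjl : j ≠ l)
    (hkl : k ≠ l) :
    ∃ ε1 ε2 ε3 : ℚ, (ε1 = 1 ∨ ε1 = -1) ∧ (ε2 = 1 ∨ ε2 = -1) ∧ (ε3 = 1 ∨ ε3 = -1) ∧
      ε1 • G.dodgson v0 {i, j} {k, l} ∅ - ε2 • G.dodgson v0 {i, k} {j, l} ∅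
        + ε3 • G.dodgson v0 {i, l} {j, k} ∅ = 0 := by
  obtain ⟨s1, hs1, h1⟩ := G.dodgson_pair_eq_smul_pairCofactor v0 hij hkl
  obtain ⟨s2, hs2, h2⟩ := G.dodgson_pair_eq_smul_pairCofactor v0 hik hjl
  obtain ⟨s3, hs3, h3⟩ := G.dodgson_pair_eq_smul_pairCofactor v0 hil hjk
  have hsign : ∀ s : ℚ, (s = 1 ∨ s = -1) → ∀ x : MvPolynomial E ℚ, s • s • x = x := by
    rintro s (rfl | rfl) x <;> simp
  refine ⟨s1, s2, s3, hs1, hs2, hs3, ?_⟩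
  rw [h1, h2, h3, hsign s1 hs1, hsign s2 hs2, hsign s3 hs3]
  exact Matrix.pairCofactor_plucker _ (G.det_bigMatK_empty_ne_zero hconn v0)
    (Sum.inl_injective.ne hij) (Sum.inl_injective.ne hik) (Sum.inl_injective.ne hil)
    (G.adjugate_bigMatK_empty_inl_comm v0 j k) (G.adjugate_bigMatK_empty_inl_comm v0 j l)
    (G.adjugate_bigMatK_empty_inl_comm v0 k l)
end
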